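/- Assume D = 0 and Re(λ_i) < 0 for all i = 1,…,n (the system is asymptotically stable and strictly proper). Then for every ω > 0, ‖H‖²_{H2,ω} = tr( Σ_{i=1}^n (−(2/π)·atan(ω/λ_i)) · φ_i · H(−λ_i)ᵀ ). (The evaluation H(−λ_i) is well defined because −λ_i has positive real part and hence is not a pole.) -/

import Mathlib

open Complex Matrix MeasureTheory intervalIntegral BigOperators

/-- Strictly proper transfer function `H(s) = Σᵢ (s − λᵢ)⁻¹ • φᵢ`. -/
noncomputable def transferH {n n_u n_y : ℕ} (lam : Fin n → ℂ)
    (φ : Fin n → Matrix (Fin n_y) (Fin n_u) ℂ) (s : ℂ) : Matrix (Fin n_y) (Fin n_u) ℂ :=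
  ∑ i, (s - lam i)⁻¹ • φ i

/-- Squared frequency-limited H2-norm:
`‖H‖²_{H2,ω} = (1/(2π)) ∫_{−ω}^{ω} tr(H(iν)·H(−iν)ᵀ) dν`. -/
noncomputable def h2wSq {n n_u n_y : ℕ} (lam : Fin n → ℂ)
    (φ : Fin n → Matrix (Fin n_y) (Fin n_u) ℂ) (ω : ℝ) : ℂ :=
  (2 * (Real.pi : ℂ))⁻¹ * ∫ ν : ℝ in (-ω)..ω,
    (transferH lam φ (Complex.I * (ν : ℂ)) *
      (transferH lam φ (-(Complex.I * (ν : ℂ))))ᵀ).trace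

/-- Principal complex arctangent: `atan z = (1/(2i))·(log(1+iz) − log(1−iz))`,
where `log` is the principal branch of the complex logarithm. -/
noncomputable def catan (z : ℂ) : ℂ :=
  (2 * Complex.I)⁻¹ * (Complex.log (1 + Complex.I * z) - Complex.log (1 - Complex.I * z))

/-! The integrand is the double sum of `(iν − λᵢ)⁻¹ (−iν − λⱼ)⁻¹ tr(φᵢ φⱼᵀ)`. A partial-fraction
step splits each product into two simple poles, and `−i log(iν − a)` is an antiderivative of
`(iν − a)⁻¹` on the whole real line, because `Re a < 0` keeps `iν − a` in the right half-plane,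
where the principal logarithm is holomorphic and additive; the boundary values assemble into
`−2 atan(ω/a)`. The symmetry `tr(φᵢ φⱼᵀ) = tr(φⱼ φᵢᵀ)` then folds the double sum into the single
sum `Σᵢ atan(ω/λᵢ) tr(φᵢ H(−λᵢ)ᵀ)`. -/

namespace Complex

lemma log_mul_of_re_pos {u c : ℂ} (hu : 0 < u.re) (hc : 0 < c.re) :
    log (u * c) = log u + log c := by
  refine log_mul (fun h ↦ by simp [h] at hu) (fun h ↦ by simp [h] at hc) ?_
  have hu' := abs_lt.mp (abs_arg_lt_pi_div_two_iff.mpr (Or.inl hu))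
  have hc' := abs_lt.mp (abs_arg_lt_pi_div_two_iff.mpr (Or.inl hc))
  constructor <;> linarith [Real.pi_pos]

section StablePole

variable {a : ℂ}

lemma re_I_mul_ofReal_sub_pos (ha : a.re < 0) (t : ℝ) : 0 < (I * t - a).re := by
  simp only [sub_re, mul_re, I_re, I_im, ofReal_re, ofReal_im]
  linarith

lemma I_mul_ofReal_sub_ne_zero (ha : a.re < 0) (t : ℝ) : I * t - a ≠ 0 :=
  fun h ↦ by simpa [h] using re_I_mul_ofReal_sub_pos ha t

lemma continuous_inv_I_mul_ofReal_sub (ha : a.re < 0) :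
    Continuous fun t : ℝ ↦ (I * t - a)⁻¹ :=
  (by fun_prop : Continuous fun t : ℝ ↦ I * t - a).inv₀ (I_mul_ofReal_sub_ne_zero ha)

lemma continuous_inv_neg_I_mul_ofReal_sub (ha : a.re < 0) :
    Continuous fun t : ℝ ↦ (-(I * t) - a)⁻¹ := by
  refine ((continuous_inv_I_mul_ofReal_sub ha).comp continuous_neg).congr fun t ↦ ?_
  simp

lemma hasDerivAt_neg_I_mul_log_I_mul_ofReal_sub (ha : a.re < 0) (t : ℝ) :
    HasDerivAt (fun t : ℝ ↦ -I * log (I * t - a)) (I * t - a)⁻¹ t := by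
  have hlin : HasDerivAt (fun t : ℝ ↦ I * t - a) I t := by
    simpa using (ofRealCLM.hasDerivAt (x := t)).const_mul I |>.sub_const a
  have hlog := (hasDerivAt_log (mem_slitPlane_iff.mpr (Or.inl
    (re_I_mul_ofReal_sub_pos ha t)))).comp t hlin
  have hval : -I * ((I * t - a)⁻¹ * I) = (I * t - a)⁻¹ := by
    linear_combination (-(I * t - a)⁻¹) * I_sq
  exact (hlog.const_mul (-I)).congr_deriv hval

lemma catan_div_eq (ha : a.re < 0) (ω : ℝ) :
    catan (ω / a) = (2 * I)⁻¹ * (log (-(I * ω) - a) - log (I * ω - a)) := by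
  have ha0 : a ≠ 0 := fun h ↦ by simp [h] at ha
  have hc : 0 < (-a⁻¹).re := by
    rw [neg_re, inv_re]
    linarith [div_neg_of_neg_of_pos ha (normSq_pos.mpr ha0)]
  have hplus : 1 + I * (ω / a) = (I * ((-ω : ℝ) : ℂ) - a) * -a⁻¹ := by
    push_cast; field_simp; ring
  have hminus : 1 - I * (ω / a) = (I * ω - a) * -a⁻¹ := by
    field_simp; ring
  rw [catan, hplus, hminus, log_mul_of_re_pos (re_I_mul_ofReal_sub_pos ha _) hc,
    log_mul_of_re_pos (re_I_mul_ofReal_sub_pos ha _) hc]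
  push_cast
  ring_nf

lemma integral_inv_I_mul_ofReal_sub (ha : a.re < 0) (ω : ℝ) :
    ∫ t in (-ω)..ω, (I * t - a)⁻¹ = -2 * catan (ω / a) := by
  rw [intervalIntegral.integral_eq_sub_of_hasDerivAt
    (fun t _ ↦ hasDerivAt_neg_I_mul_log_I_mul_ofReal_sub ha t)
    ((continuous_inv_I_mul_ofReal_sub ha).intervalIntegrable _ _), catan_div_eq ha,
    mul_inv, inv_I]
  push_cast
  ring_nf

lemma integral_inv_neg_I_mul_ofReal_sub (ha : a.re < 0) (ω : ℝ) :
    ∫ t in (-ω)..ω, (-(I * t) - a)⁻¹ = -2 * catan (ω / a) := by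
  have := intervalIntegral.integral_comp_neg (a := -ω) (b := ω)
    (fun t : ℝ ↦ (I * t - a)⁻¹)
  simp only [ofReal_neg, mul_neg, neg_neg] at this
  rw [this, integral_inv_I_mul_ofReal_sub ha]

end StablePole

lemma integral_inv_mul_inv {a b : ℂ} (ha : a.re < 0) (hb : b.re < 0) (ω : ℝ) :
    ∫ t in (-ω)..ω, (I * t - a)⁻¹ * (-(I * t) - b)⁻¹
      = 2 * (a + b)⁻¹ * (catan (ω / a) + catan (ω / b)) := by
  have hab : a + b ≠ 0 := fun h ↦ by
    have := add_neg ha hb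
    rw [← add_re, h, zero_re] at this
    exact this.false
  have hsplit : ∀ t : ℝ, (I * t - a)⁻¹ * (-(I * t) - b)⁻¹
      = -(a + b)⁻¹ * ((I * t - a)⁻¹ + (-(I * t) - b)⁻¹) := by
    intro t
    have h₁ := I_mul_ofReal_sub_ne_zero ha t
    have h₂ : -(I * t) - b ≠ 0 := by
      simpa [ofReal_neg] using I_mul_ofReal_sub_ne_zero hb (-t)
    field_simp
    ring
  simp_rw [hsplit]
  rw [intervalIntegral.integral_const_mul, intervalIntegral.integral_add
    ((continuous_inv_I_mul_ofReal_sub ha).intervalIntegrable _ _)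
    ((continuous_inv_neg_I_mul_ofReal_sub hb).intervalIntegrable _ _),
    integral_inv_I_mul_ofReal_sub ha, integral_inv_neg_I_mul_ofReal_sub hb]
  ring

end Complex

section TransferFunction

variable {n n_u n_y : ℕ} (lam : Fin n → ℂ) (φ : Fin n → Matrix (Fin n_y) (Fin n_u) ℂ)

lemma trace_transferH_mul_transpose (s : ℂ) (B : Matrix (Fin n_y) (Fin n_u) ℂ) :
    (transferH lam φ s * Bᵀ).trace = ∑ i, (s - lam i)⁻¹ * (φ i * Bᵀ).trace := by
  simp only [transferH, Matrix.sum_mul, Matrix.smul_mul, Matrix.trace_sum, Matrix.trace_smul,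
    smul_eq_mul]

lemma trace_mul_transpose_transferH (A : Matrix (Fin n_y) (Fin n_u) ℂ) (s : ℂ) :
    (A * (transferH lam φ s)ᵀ).trace = ∑ j, (s - lam j)⁻¹ * (A * (φ j)ᵀ).trace := by
  simp only [transferH, Matrix.transpose_sum, Matrix.transpose_smul, Matrix.mul_sum,
    Matrix.mul_smul, Matrix.trace_sum, Matrix.trace_smul, smul_eq_mul]

lemma trace_transferH_mul_transpose_transferH (s t : ℂ) :
    (transferH lam φ s * (transferH lam φ t)ᵀ).trace
      = ∑ i, ∑ j, (s - lam i)⁻¹ * (t - lam j)⁻¹ * (φ i * (φ j)ᵀ).trace := by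
  rw [trace_transferH_mul_transpose]
  simp only [trace_mul_transpose_transferH, Finset.mul_sum, mul_assoc]

lemma trace_mul_transpose_comm {m k R : Type*} [Fintype m] [Fintype k] [CommSemiring R]
    (A B : Matrix m k R) : (A * Bᵀ).trace = (B * Aᵀ).trace := by
  rw [← Matrix.trace_transpose, Matrix.transpose_mul, Matrix.transpose_transpose]

variable {lam}

lemma integral_trace_transferH (hstable : ∀ i, (lam i).re < 0) (ω : ℝ) :
    ∫ ν : ℝ in (-ω)..ω, (transferH lam φ (I * ν) * (transferH lam φ (-(I * ν)))ᵀ).trace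
      = ∑ i, ∑ j, 2 * (lam i + lam j)⁻¹ * (catan (ω / lam i) + catan (ω / lam j))
          * (φ i * (φ j)ᵀ).trace := by
  have hcont : ∀ i j, Continuous fun ν : ℝ ↦
      (I * ν - lam i)⁻¹ * (-(I * ν) - lam j)⁻¹ * (φ i * (φ j)ᵀ).trace := fun i j ↦
    ((continuous_inv_I_mul_ofReal_sub (hstable i)).mul
      (continuous_inv_neg_I_mul_ofReal_sub (hstable j))).mul continuous_const
  simp_rw [trace_transferH_mul_transpose_transferH]
  rw [intervalIntegral.integral_finsetSum fun i _ ↦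
    (continuous_finsetSum _ fun j _ ↦ hcont i j).intervalIntegrable _ _]
  refine Finset.sum_congr rfl fun i _ ↦ ?_
  rw [intervalIntegral.integral_finsetSum fun j _ ↦ (hcont i j).intervalIntegrable _ _]
  refine Finset.sum_congr rfl fun j _ ↦ ?_
  rw [intervalIntegral.integral_mul_const, integral_inv_mul_inv (hstable i) (hstable j)]

/-- The two halves agree because `λᵢ + λⱼ` and `tr(φᵢ φⱼᵀ)` are symmetric in `i, j`. -/
lemma sum_sum_catan_add_catan (ω : ℝ) :
    ∑ i, ∑ j, 2 * (lam i + lam j)⁻¹ * (catan (ω / lam i) + catan (ω / lam j))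
        * (φ i * (φ j)ᵀ).trace
      = 4 * ∑ i, ∑ j, (lam i + lam j)⁻¹ * catan (ω / lam i) * (φ i * (φ j)ᵀ).trace := by
  have hswap : ∑ i, ∑ j, (lam i + lam j)⁻¹ * catan (ω / lam j) * (φ i * (φ j)ᵀ).trace
      = ∑ i, ∑ j, (lam i + lam j)⁻¹ * catan (ω / lam i) * (φ i * (φ j)ᵀ).trace := by
    rw [Finset.sum_comm]
    refine Finset.sum_congr rfl fun i _ ↦ Finset.sum_congr rfl fun j _ ↦ ?_
    rw [add_comm (lam j), trace_mul_transpose_comm (φ j)]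
  calc _ = 2 * ∑ i, ∑ j, (lam i + lam j)⁻¹ * catan (ω / lam i) * (φ i * (φ j)ᵀ).trace
        + 2 * ∑ i, ∑ j, (lam i + lam j)⁻¹ * catan (ω / lam j) * (φ i * (φ j)ᵀ).trace := by
        simp only [Finset.mul_sum, ← Finset.sum_add_distrib]
        exact Finset.sum_congr rfl fun i _ ↦ Finset.sum_congr rfl fun j _ ↦ by ring
    _ = _ := by rw [hswap]; ring

end TransferFunction

theorem stmt_2_general (n n_u n_y : ℕ)
    (lam : Fin n → ℂ)
    (φ : Fin n → Matrix (Fin n_y) (Fin n_u) ℂ)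
    (hstable : ∀ i, (lam i).re < 0) (ω : ℝ) :
    h2wSq lam φ ω
      = (∑ i, (-(2 / (Real.pi : ℂ)) * catan ((ω : ℂ) / lam i)) •
          (φ i * (transferH lam φ (-lam i))ᵀ)).trace := by
  have hπ : (Real.pi : ℂ) ≠ 0 := ofReal_ne_zero.mpr Real.pi_ne_zero
  rw [h2wSq, integral_trace_transferH φ hstable, sum_sum_catan_add_catan, Matrix.trace_sum]
  simp only [Matrix.trace_smul, trace_mul_transpose_transferH, smul_eq_mul, Finset.mul_sum]
  refine Finset.sum_congr rfl fun i _ ↦ Finset.sum_congr rfl fun j _ ↦ ?_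
  rw [show -lam i - lam j = -(lam i + lam j) by ring, inv_neg]
  field_simp
  ring

theorem stmt_2 (n n_u n_y : ℕ) (hn : 0 < n) (hnu : 0 < n_u) (hny : 0 < n_y)
    (lam : Fin n → ℂ) (hdist : Function.Injective lam)
    (φ : Fin n → Matrix (Fin n_y) (Fin n_u) ℂ)
    (hstable : ∀ i, (lam i).re < 0) (ω : ℝ) (hω : 0 < ω) :
    h2wSq lam φ ω
      = (∑ i, (-(2 / (Real.pi : ℂ)) * catan ((ω : ℂ) / lam i)) •
          (φ i * (transferH lam φ (-lam i))ᵀ)).trace :=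
  stmt_2_general n n_u n_y lam φ hstable ω
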